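/- Let A = (Q,T) be a d-dimensional VASS satisfying condition (C) and let n be a good normal for A. Then there is a constant κ ∈ ℝ⁺ such that for every w ∈ cone(Inc(A)) with w · n = 0 and Euclidean norm 1, there exist k ∈ ℕ, positive reals a_1,…,a_k, and vectors v_1,…,v_k ∈ Inc(A) such that w = Σ_{j=1}^k a_j v_j, v_j · n = 0 for all 1 ≤ j ≤ k, and for every k' ≤ k the absolute values of all components of Σ_{j=1}^{k'} a_j v_j are bounded by κ. -/

import Mathlib

open scoped BigOperators ENNReal

/-- A `d`-dimensional VASS: a set of states `Q` together with transitions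
labelled by vectors in `{-1,0,1}^d`. -/
structure VASS (d : ℕ) (Q : Type) where
  T : Set (Q × (Fin d → ℤ) × Q)
  upd_mem : ∀ t ∈ T, ∀ i, t.2.1 i = -1 ∨ t.2.1 i = 0 ∨ t.2.1 i = 1

namespace VASS

variable {d : ℕ} {Q : Type}

/-- Scalar product of an integer vector with a real vector. -/
def dotZ (v : Fin d → ℤ) (w : Fin d → ℝ) : ℝ := ∑ i, (v i : ℝ) * w i

/-- Scalar product of two real vectors. -/
def dotR (v w : Fin d → ℝ) : ℝ := ∑ i, v i * w i

/-- `A.IsPath n p u` : `p 0, u 0, p 1, u 1, …, u (n-1), p n` is a finite path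
of length `n ≥ 1` in `A`. -/
def IsPath (A : VASS d Q) (n : ℕ) (p : ℕ → Q) (u : ℕ → Fin d → ℤ) : Prop :=
  1 ≤ n ∧ ∀ i < n, (p i, u i, p (i + 1)) ∈ A.T

/-- Effect of a path of length `n` with update vectors `u`. -/
def eff (n : ℕ) (u : ℕ → Fin d → ℤ) : Fin d → ℤ :=
  fun i => ∑ j ∈ Finset.range n, u j i

/-- A short cycle: a cycle of length at most `|Q|`. -/
def IsShortCycle (A : VASS d Q) (n : ℕ) (p : ℕ → Q) (u : ℕ → Fin d → ℤ) : Prop :=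
  A.IsPath n p u ∧ p n = p 0 ∧ n ≤ Nat.card Q

/-- `Inc A` : the set of effects of short cycles of `A`. -/
def Inc (A : VASS d Q) : Set (Fin d → ℤ) :=
  { v | ∃ n p u, A.IsShortCycle n p u ∧ v = eff n u }

/-- A zero-avoiding computation of length `n` : all configurations have all
counters positive and consecutive configurations are related by transitions. -/
def IsZeroAvoiding (A : VASS d Q) (n : ℕ) (q : ℕ → Q) (z : ℕ → Fin d → ℕ) : Prop :=
  (∀ i ≤ n, ∀ j, 0 < z i j) ∧
  ∀ i < n, (q i, fun j => (z (i + 1) j : ℤ) - (z i j : ℤ), q (i + 1)) ∈ A.T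

/-- `L(pv)` : the least bound on the length of zero-avoiding computations
initiated in the configuration `p v`. -/
noncomputable def Lval (A : VASS d Q) (p : Q) (v : Fin d → ℕ) : ℕ∞ :=
  ⨆ (n : ℕ) (_ : ∃ q z, q 0 = p ∧ z 0 = v ∧ A.IsZeroAvoiding n q z), (n : ℕ∞)

/-- Termination complexity `𝓛(n)` : the max of `L(pv)` over configurations of size `n`. -/
noncomputable def L (A : VASS d Q) (n : ℕ) : ℕ∞ :=
  ⨆ (p : Q) (v : Fin d → ℕ) (_ : Finset.univ.sup v = n), A.Lval p v

/-- The set of normals of `A`: nonzero vectors `nv` with `v · nv ≤ 0` for all `v ∈ Inc A`. -/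
def Normals (A : VASS d Q) : Set (Fin d → ℝ) :=
  { nv | nv ≠ 0 ∧ ∀ v ∈ A.Inc, dotZ v nv ≤ 0 }

/-- The cone (over ℝ) generated by a set of integer vectors. -/
def coneZ (V : Set (Fin d → ℤ)) : Set (Fin d → ℝ) :=
  { x | ∃ (k : ℕ) (a : Fin k → ℝ) (v : Fin k → Fin d → ℤ),
      (∀ j, 0 ≤ a j) ∧ (∀ j, v j ∈ V) ∧ x = ∑ j, a j • (fun i => ((v j i : ℝ))) }

/-- A good normal: a positive normal such that for every `v ∈ cone(Inc A)`,
`-v ∈ cone(Inc A)` iff `v · n = 0`. -/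
def IsGoodNormal (A : VASS d Q) (nv : Fin d → ℝ) : Prop :=
  nv ∈ A.Normals ∧ (∀ i, 0 < nv i) ∧
  ∀ x ∈ coneZ A.Inc, (-x ∈ coneZ A.Inc ↔ dotR x nv = 0)

/-- `A.Reaches p q` : there is a finite path from `p` to `q`. -/
def Reaches (A : VASS d Q) (p q : Q) : Prop :=
  ∃ n pp u, A.IsPath n pp u ∧ pp 0 = p ∧ pp n = q

/-- A strongly connected component: a maximal set of states pairwise connected
by finite paths. -/
def IsSCC (A : VASS d Q) (R : Set Q) : Prop :=
  (∀ p ∈ R, ∀ q ∈ R, p ≠ q → A.Reaches p q) ∧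
  ∀ S : Set Q, R ⊆ S → (∀ p ∈ S, ∀ q ∈ S, p ≠ q → A.Reaches p q) → S = R

/-- The VASS `A` restricted to the states of `R` and transitions within `R`. -/
def restrict (A : VASS d Q) (R : Set Q) : VASS d R where
  T := { t | ((t.1 : Q), t.2.1, (t.2.2 : Q)) ∈ A.T }
  upd_mem := fun _ ht i => A.upd_mem _ ht i

/-- The VASS `A^nv = (Q, T_nv)` where `T_nv` consists of the transitions of `A`
contained in some short cycle `γ` with `eff(γ) · nv = 0`. -/
def neutral (A : VASS d Q) (nv : Fin d → ℝ) : VASS d Q where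
  T := { t ∈ A.T | ∃ n p u, A.IsShortCycle n p u ∧ dotZ (eff n u) nv = 0 ∧
          ∃ i < n, (p i, u i, p (i + 1)) = t }
  upd_mem := fun t ht i => A.upd_mem t ht.1 i

end VASS

/-!
Every entry of a vector in `Inc(A)` is bounded by `|Q|`, so `Inc(A)` is finite. By the conic
Carathéodory theorem, `w` is a positive combination of linearly independent vectors of `Inc(A)`;
as each of them has non-positive product with the normal `n` while `w · n = 0`, all of them are
orthogonal to `n`. For a fixed linearly independent family the coefficients depend linearly, hence
boundedly, on `w`; there are only finitely many such families in the finite set `Inc(A)`, so one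
constant `C` bounds the coefficients of every unit vector `w`. There are at most `d` summands, so
every partial sum has entries bounded by `d · C · |Q|`.
-/

open Filter

section Caratheodory

variable {𝕜 E : Type*} [Field 𝕜] [LinearOrder 𝕜] [IsStrictOrderedRing 𝕜]
  [AddCommGroup E] [Module 𝕜 E]

theorem exists_nonneg_combination_eq_with_zero_of_not_linearIndependent {k : ℕ}
    {f : Fin k → E} (hf : ¬LinearIndependent 𝕜 f) {a : Fin k → 𝕜} (ha : ∀ j, 0 ≤ a j) :
    ∃ a' : Fin k → 𝕜, (∀ j, 0 ≤ a' j) ∧ (∃ j, a' j = 0) ∧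
      ∑ j, a' j • f j = ∑ j, a j • f j := by
  obtain ⟨g, hg, j1, hgj1⟩ : ∃ g : Fin k → 𝕜, ∑ j, g j • f j = 0 ∧ ∃ j, 0 < g j := by
    obtain ⟨g, hg, j1, hj1⟩ := Fintype.not_linearIndependent_iff.mp hf
    rcases hj1.lt_or_gt with hneg | hpos
    · exact ⟨-g, by simp [neg_smul, hg], j1, neg_pos.mpr hneg⟩
    · exact ⟨g, hg, j1, hpos⟩
  obtain ⟨j0, hj0, hmin⟩ := Finset.exists_min_image {j | 0 < g j} (fun j => a j / g j)
    ⟨j1, by simpa using hgj1⟩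
  have hgj0 : 0 < g j0 := by simpa using hj0
  -- the largest step along the dependence `g` that keeps every coefficient nonnegative
  set t := a j0 / g j0
  refine ⟨fun j => a j - t * g j, fun j => ?_, ⟨j0, ?_⟩, ?_⟩
  · rcases le_or_gt (g j) 0 with hg_nonpos | hg_pos
    · nlinarith [ha j, div_nonneg (ha j0) hgj0.le]
    · have := hmin j (by simpa using hg_pos)
      rw [le_div_iff₀ hg_pos] at this
      linarith
  · exact sub_eq_zero.mpr (div_mul_cancel₀ _ hgj0.ne').symm
  · simp only [sub_smul, Finset.sum_sub_distrib, mul_smul, ← Finset.smul_sum, hg, smul_zero,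
      sub_zero]

/-- Conic Carathéodory theorem. -/
theorem exists_linearIndependent_pos_combination_eq :
    ∀ {k : ℕ} (f : Fin k → E) (a : Fin k → 𝕜), (∀ j, 0 ≤ a j) →
      ∃ (m : ℕ) (σ : Fin m → Fin k) (b : Fin m → 𝕜), (∀ j, 0 < b j) ∧
        LinearIndependent 𝕜 (f ∘ σ) ∧ ∑ j, b j • f (σ j) = ∑ j, a j • f j
  | 0, _, _, _ => ⟨0, Fin.elim0, Fin.elim0, (·.elim0), linearIndependent_empty_type, by simp⟩
  | k + 1, f, a, ha => by
    by_cases hdone : (∀ j, 0 < a j) ∧ LinearIndependent 𝕜 f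
    · exact ⟨k + 1, id, a, hdone.1, hdone.2, rfl⟩
    obtain ⟨a', ha', ⟨j0, hj0⟩, hsum⟩ : ∃ a' : Fin (k + 1) → 𝕜, (∀ j, 0 ≤ a' j) ∧
        (∃ j, a' j = 0) ∧ ∑ j, a' j • f j = ∑ j, a j • f j := by
      rcases not_and_or.mp hdone with hpos | hli
      · obtain ⟨j, hj⟩ := not_forall.mp hpos
        exact ⟨a, ha, ⟨j, le_antisymm (not_lt.mp hj) (ha j)⟩, rfl⟩
      · exact exists_nonneg_combination_eq_with_zero_of_not_linearIndependent hli ha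
    obtain ⟨m, σ, b, hb, hli, hb_sum⟩ :=
      exists_linearIndependent_pos_combination_eq (f ∘ j0.succAbove) (a' ∘ j0.succAbove)
        fun j => ha' _
    refine ⟨m, j0.succAbove ∘ σ, b, hb, hli, ?_⟩
    rw [← hsum, Fin.sum_univ_succAbove _ j0, hj0, zero_smul, zero_add]
    exact hb_sum

end Caratheodory

section CoefficientBound

variable {E : Type*} [NormedAddCommGroup E] [NormedSpace ℝ E]

theorem LinearIndependent.eventually_norm_le_mul_norm_sum {ι : Type*} [Fintype ι]
    {f : ι → E} (hf : LinearIndependent ℝ f) :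
    ∀ᶠ C in atTop, ∀ a : ι → ℝ, ‖a‖ ≤ C * ‖∑ j, a j • f j‖ := by
  obtain ⟨K, -, hK⟩ := (Fintype.linearCombination ℝ f).exists_antilipschitzWith
    (LinearMap.ker_eq_bot.mpr hf.fintypeLinearCombination_injective)
  filter_upwards [eventually_ge_atTop (K : ℝ)] with C hC a
  calc ‖a‖ ≤ K * ‖Fintype.linearCombination ℝ f a‖ := hK.le_mul_norm (map_zero _) a
    _ ≤ C * ‖∑ j, a j • f j‖ := by
      rw [Fintype.linearCombination_apply]
      gcongr

/-- A linearly independent family has at most `finrank ℝ E` members, so `V` carries only finitely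
many of them and their individual bounds can be combined. -/
theorem Set.Finite.exists_norm_le_mul_norm_sum_of_linearIndependent [FiniteDimensional ℝ E]
    {V : Set E} (hV : V.Finite) :
    ∃ C, 0 ≤ C ∧ ∀ (k : ℕ) (f : Fin k → E), (∀ j, f j ∈ V) → LinearIndependent ℝ f →
      ∀ a : Fin k → ℝ, ‖a‖ ≤ C * ‖∑ j, a j • f j‖ := by
  have hbound : ∀ᶠ C in atTop, ∀ k ∈ Set.Iic (Module.finrank ℝ E),
      ∀ f ∈ Set.univ.pi fun _ : Fin k => V, LinearIndependent ℝ f →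
        ∀ a : Fin k → ℝ, ‖a‖ ≤ C * ‖∑ j, a j • f j‖ := by
    refine (eventually_all_finite (Set.finite_Iic _)).mpr fun k _ =>
      (eventually_all_finite (Set.Finite.pi fun _ => hV)).mpr fun f _ => ?_
    by_cases hf : LinearIndependent ℝ f
    · exact hf.eventually_norm_le_mul_norm_sum.mono fun _ hC _ => hC
    · exact Eventually.of_forall fun _ hli => absurd hli hf
  obtain ⟨C, hC, hC0⟩ := (hbound.and (eventually_ge_atTop 0)).exists
  refine ⟨C, hC0, fun k f hf hli => hC k ?_ f (fun j _ => hf j) hli⟩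
  simpa using hli.fintype_card_le_finrank

end CoefficientBound

theorem abs_le_sqrt_sum_sq {ι : Type*} [Fintype ι] (w : ι → ℝ) (i : ι) :
    |w i| ≤ √(∑ j, w j ^ 2) :=
  Real.abs_le_sqrt (Finset.single_le_sum (fun j _ => sq_nonneg (w j)) (Finset.mem_univ i))

theorem abs_sum_mul_le_card_mul {ι : Type*} [Fintype ι] (s : Finset ι) {a x : ι → ℝ} {α β : ℝ}
    (hα : 0 ≤ α) (hβ : 0 ≤ β) (ha : ∀ j, |a j| ≤ α) (hx : ∀ j, |x j| ≤ β) :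
    |∑ j ∈ s, a j * x j| ≤ Fintype.card ι * (α * β) :=
  calc |∑ j ∈ s, a j * x j| ≤ ∑ j ∈ s, |a j| * |x j| :=
        (Finset.abs_sum_le_sum_abs _ _).trans_eq (Finset.sum_congr rfl fun j _ => abs_mul _ _)
    _ ≤ s.card • (α * β) :=
        Finset.sum_le_card_nsmul _ _ _ fun j _ => mul_le_mul (ha j) (hx j) (abs_nonneg _) hα
    _ ≤ Fintype.card ι * (α * β) := by
        rw [nsmul_eq_mul]
        gcongr
        exact_mod_cast s.card_le_univ

namespace VASS

variable {d : ℕ} {Q : Type}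

theorem abs_update_le_one (A : VASS d Q) {t : Q × (Fin d → ℤ) × Q} (ht : t ∈ A.T) (i : Fin d) :
    |t.2.1 i| ≤ 1 := by
  rcases A.upd_mem t ht i with h | h | h <;> simp [h]

theorem abs_le_card_of_mem_Inc {A : VASS d Q} {v : Fin d → ℤ} (hv : v ∈ A.Inc) (i : Fin d) :
    |v i| ≤ Nat.card Q := by
  obtain ⟨n, p, u, ⟨⟨-, hpath⟩, -, hlen⟩, rfl⟩ := hv
  have hu : ∀ j ∈ Finset.range n, |u j i| ≤ 1 := fun j hj =>
    A.abs_update_le_one (hpath j (Finset.mem_range.mp hj)) i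
  calc |eff n u i| ≤ ∑ j ∈ Finset.range n, |u j i| := Finset.abs_sum_le_sum_abs _ _
    _ ≤ ∑ j ∈ Finset.range n, 1 := Finset.sum_le_sum hu
    _ ≤ Nat.card Q := by simpa using hlen

theorem Inc_finite (A : VASS d Q) : A.Inc.Finite :=
  (Set.finite_Icc (fun _ => -(Nat.card Q : ℤ)) fun _ => (Nat.card Q : ℤ)).subset
    fun _ hv => ⟨fun i => neg_le_of_abs_le (abs_le_card_of_mem_Inc hv i),
      fun i => le_of_abs_le (abs_le_card_of_mem_Inc hv i)⟩

theorem dotR_sum_smul {k : ℕ} (a : Fin k → ℝ) (v : Fin k → Fin d → ℤ) (nv : Fin d → ℝ) :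
    dotR (∑ j, a j • fun i => (v j i : ℝ)) nv = ∑ j, a j * dotZ (v j) nv := by
  simp only [dotR, dotZ, Finset.sum_apply, Pi.smul_apply, smul_eq_mul, Finset.sum_mul,
    Finset.mul_sum]
  rw [Finset.sum_comm]
  exact Finset.sum_congr rfl fun j _ => Finset.sum_congr rfl fun i _ => by ring

theorem dotZ_eq_zero_of_pos_combination {A : VASS d Q} {nv : Fin d → ℝ} (hn : nv ∈ A.Normals)
    {k : ℕ} {a : Fin k → ℝ} {v : Fin k → Fin d → ℤ} (ha : ∀ j, 0 < a j) (hv : ∀ j, v j ∈ A.Inc)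
    (horth : dotR (∑ j, a j • fun i => (v j i : ℝ)) nv = 0) (j : Fin k) :
    dotZ (v j) nv = 0 := by
  rw [dotR_sum_smul] at horth
  have hterm := (Finset.sum_eq_zero_iff_of_nonpos fun j _ =>
    mul_nonpos_of_nonneg_of_nonpos (ha j).le (hn.2 _ (hv j))).mp horth j (Finset.mem_univ j)
  exact (mul_eq_zero.mp hterm).resolve_left (ha j).ne'

theorem exists_linearIndependent_orthogonal_decomposition {A : VASS d Q} {nv : Fin d → ℝ}
    (hn : nv ∈ A.Normals) {w : Fin d → ℝ} (hw : w ∈ coneZ A.Inc) (horth : dotR w nv = 0) :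
    ∃ (k : ℕ) (a : Fin k → ℝ) (v : Fin k → Fin d → ℤ),
      (∀ j, 0 < a j) ∧ (∀ j, v j ∈ A.Inc) ∧ w = ∑ j, a j • (fun i => (v j i : ℝ)) ∧
      (∀ j, dotZ (v j) nv = 0) ∧ LinearIndependent ℝ fun j i => (v j i : ℝ) := by
  obtain ⟨k0, a0, v0, ha0, hv0, rfl⟩ := hw
  obtain ⟨k, σ, a, ha, hli, hsum⟩ :=
    exists_linearIndependent_pos_combination_eq (fun j i => (v0 j i : ℝ)) a0 ha0
  rw [← hsum] at horth ⊢
  exact ⟨k, a, v0 ∘ σ, ha, fun j => hv0 _, rfl,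
    dotZ_eq_zero_of_pos_combination hn ha (fun j => hv0 _) horth, hli⟩

end VASS

theorem stmt15_general {d : ℕ} {Q : Type} (A : VASS d Q)
    (nv : Fin d → ℝ) (hgood : A.IsGoodNormal nv) :
    ∃ κ : ℝ, 0 < κ ∧ ∀ w : Fin d → ℝ, w ∈ VASS.coneZ A.Inc → VASS.dotR w nv = 0 →
      Real.sqrt (∑ i, w i ^ 2) = 1 →
      ∃ (k : ℕ) (a : Fin k → ℝ) (v : Fin k → Fin d → ℤ),
        (∀ j, 0 < a j) ∧ (∀ j, v j ∈ A.Inc) ∧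
        (w = ∑ j, a j • (fun i => ((v j i : ℝ)))) ∧
        (∀ j, VASS.dotZ (v j) nv = 0) ∧
        (∀ k' : ℕ, k' ≤ k → ∀ i : Fin d,
          |∑ j ∈ Finset.univ.filter (fun j : Fin k => (j : ℕ) < k'), a j * (v j i : ℝ)| ≤ κ) := by
  obtain ⟨C, hC0, hC⟩ :=
    (A.Inc_finite.image fun v i => (v i : ℝ)).exists_norm_le_mul_norm_sum_of_linearIndependent
  refine ⟨d * (C * Nat.card Q) + 1, by positivity, fun w hw horth hnorm => ?_⟩
  obtain ⟨k, a, v, ha, hv, rfl, hvorth, hli⟩ :=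
    A.exists_linearIndependent_orthogonal_decomposition hgood.1 hw horth
  refine ⟨k, a, v, ha, hv, rfl, hvorth, fun k' _ i => ?_⟩
  have hw_le : ‖∑ j, a j • fun i => (v j i : ℝ)‖ ≤ 1 :=
    (pi_norm_le_iff_of_nonneg zero_le_one).mpr fun i => hnorm ▸ abs_le_sqrt_sum_sq _ i
  have ha_le : ∀ j, |a j| ≤ C := fun j =>
    calc |a j| ≤ ‖a‖ := norm_le_pi_norm a j
      _ ≤ C * ‖∑ j, a j • fun i => (v j i : ℝ)‖ := hC k _ (fun j => ⟨v j, hv j, rfl⟩) hli a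
      _ ≤ C := mul_le_of_le_one_right hC0 hw_le
  have hk : k ≤ d := by simpa using hli.fintype_card_le_finrank
  calc _ ≤ k * (C * Nat.card Q) := by
        simpa using abs_sum_mul_le_card_mul _ hC0 (Nat.cast_nonneg _) ha_le fun j => by
          exact_mod_cast VASS.abs_le_card_of_mem_Inc (hv j) i
    _ ≤ d * (C * Nat.card Q) := by gcongr
    _ ≤ d * (C * Nat.card Q) + 1 := le_add_of_nonneg_right zero_le_one

/-- the `κ`-lemma. For a good normal `nv` there is `κ > 0` such that
every unit vector `w ∈ cone(Inc A)` with `w · nv = 0` can be written as a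
non-negative combination of vectors of `Inc(A)` orthogonal to `nv`, all of whose
partial sums have components bounded by `κ` in absolute value. -/
theorem stmt15 {d : ℕ} {Q : Type} [Fintype Q] [Nonempty Q] (A : VASS d Q)
    (nv : Fin d → ℝ) (hgood : A.IsGoodNormal nv) :
    ∃ κ : ℝ, 0 < κ ∧ ∀ w : Fin d → ℝ, w ∈ VASS.coneZ A.Inc → VASS.dotR w nv = 0 →
      Real.sqrt (∑ i, w i ^ 2) = 1 →
      ∃ (k : ℕ) (a : Fin k → ℝ) (v : Fin k → Fin d → ℤ),
        (∀ j, 0 < a j) ∧ (∀ j, v j ∈ A.Inc) ∧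
        (w = ∑ j, a j • (fun i => ((v j i : ℝ)))) ∧
        (∀ j, VASS.dotZ (v j) nv = 0) ∧
        (∀ k' : ℕ, k' ≤ k → ∀ i : Fin d,
          |∑ j ∈ Finset.univ.filter (fun j : Fin k => (j : ℕ) < k'), a j * (v j i : ℝ)| ≤ κ) :=
  stmt15_general A nv hgood
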